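/- Let α > 1 and consider the planar ODE system c'(t) = (α-1) - (α+1)c(t)², d'(t) = (α+1) - (α-1)d(t)² with initial values c(0) = 1, d(0) = 1. Then the solution exists for all t ≥ 0, c(t) stays in the interval [√((α-1)/(α+1)), 1], d(t) stays in [1, √((α+1)/(α-1))], and c(t) → √((α-1)/(α+1)) and d(t) → √((α+1)/(α-1)) as t → ∞. -/

import Mathlib

/-!
Both equations are Riccati equations `y' = p - q y²` with `p, q > 0`, whose positive equilibrium
is `a = √(p / q)`. With `k = q a`, the functions `u = y₀ cosh (k t) + a sinh (k t)` and
`v = a cosh (k t) + y₀ sinh (k t)` satisfy `u' = k v`, `v' = k u`, so `y = a u / v` solves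
`y' = k a - (k / a) y² = p - q y²` with `y 0 = y₀`. Explicitly
`y - a = a (y₀ - a) e^{-k t} / v` and `y₀ - y = (y₀² - a²) sinh (k t) / v`, so for `t ≥ 0` the
solution stays between `y₀` and `a` and converges to `a` exponentially fast.
-/

open Real Filter Set Topology

noncomputable def riccatiSol (a k y₀ t : ℝ) : ℝ :=
  a * (y₀ * cosh (k * t) + a * sinh (k * t)) / (a * cosh (k * t) + y₀ * sinh (k * t))

section
variable {a k y₀ t : ℝ}

theorem riccatiSol_zero (ha : a ≠ 0) : riccatiSol a k y₀ 0 = y₀ := by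
  simp [riccatiSol, ha]

theorem le_riccatiSol_denom (ha : 0 ≤ a) (hy₀ : 0 ≤ y₀) (hk : 0 ≤ k) (ht : 0 ≤ t) :
    a ≤ a * cosh (k * t) + y₀ * sinh (k * t) := by
  have hsinh : 0 ≤ sinh (k * t) := sinh_nonneg_iff.2 (mul_nonneg hk ht)
  nlinarith [one_le_cosh (k * t), mul_nonneg hy₀ hsinh]

theorem hasDerivAt_riccatiSol (ha : a ≠ 0) (hden : a * cosh (k * t) + y₀ * sinh (k * t) ≠ 0) :
    HasDerivAt (riccatiSol a k y₀) (k * a - k / a * riccatiSol a k y₀ t ^ 2) t := by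
  have hcosh : HasDerivAt (fun t => cosh (k * t)) (sinh (k * t) * k) t :=
    (hasDerivAt_cosh _).comp t ((hasDerivAt_id t).const_mul k |>.congr_deriv (mul_one k))
  have hsinh : HasDerivAt (fun t => sinh (k * t)) (cosh (k * t) * k) t :=
    (hasDerivAt_sinh _).comp t ((hasDerivAt_id t).const_mul k |>.congr_deriv (mul_one k))
  refine (((hcosh.const_mul y₀).add (hsinh.const_mul a)).const_mul a).div
    ((hcosh.const_mul a).add (hsinh.const_mul y₀)) hden |>.congr_deriv ?_
  simp only [riccatiSol, Pi.add_apply]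
  field_simp
  ring

theorem riccatiSol_sub (hden : a * cosh (k * t) + y₀ * sinh (k * t) ≠ 0) :
    riccatiSol a k y₀ t - a =
      a * (y₀ - a) * exp (-(k * t)) / (a * cosh (k * t) + y₀ * sinh (k * t)) := by
  rw [riccatiSol, ← cosh_sub_sinh]
  field_simp
  ring

theorem sub_riccatiSol (hden : a * cosh (k * t) + y₀ * sinh (k * t) ≠ 0) :
    y₀ - riccatiSol a k y₀ t =
      (y₀ ^ 2 - a ^ 2) * sinh (k * t) / (a * cosh (k * t) + y₀ * sinh (k * t)) := by
  rw [riccatiSol]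
  field_simp
  ring

theorem riccatiSol_mem_Icc_of_le (ha : 0 < a) (hay₀ : a ≤ y₀) (hk : 0 ≤ k) (ht : 0 ≤ t) :
    riccatiSol a k y₀ t ∈ Icc a y₀ := by
  have hden := ha.trans_le (le_riccatiSol_denom ha.le (ha.le.trans hay₀) hk ht)
  have hsinh : 0 ≤ sinh (k * t) := sinh_nonneg_iff.2 (mul_nonneg hk ht)
  constructor
  · rw [← sub_nonneg, riccatiSol_sub hden.ne']
    have : 0 ≤ y₀ - a := sub_nonneg.2 hay₀
    positivity
  · rw [← sub_nonneg, sub_riccatiSol hden.ne']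
    have : 0 ≤ y₀ ^ 2 - a ^ 2 := sub_nonneg.2 (pow_le_pow_left₀ ha.le hay₀ 2)
    positivity

theorem riccatiSol_mem_Icc_of_ge (ha : 0 < a) (hy₀ : 0 ≤ y₀) (hy₀a : y₀ ≤ a) (hk : 0 ≤ k)
    (ht : 0 ≤ t) : riccatiSol a k y₀ t ∈ Icc y₀ a := by
  have hden := ha.trans_le (le_riccatiSol_denom ha.le hy₀ hk ht)
  have hsinh : 0 ≤ sinh (k * t) := sinh_nonneg_iff.2 (mul_nonneg hk ht)
  constructor
  · rw [← sub_nonpos, sub_riccatiSol hden.ne']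
    have : y₀ ^ 2 - a ^ 2 ≤ 0 := sub_nonpos.2 (pow_le_pow_left₀ hy₀ hy₀a 2)
    exact div_nonpos_of_nonpos_of_nonneg (mul_nonpos_of_nonpos_of_nonneg this hsinh) hden.le
  · rw [← sub_nonpos, riccatiSol_sub hden.ne']
    have : y₀ - a ≤ 0 := sub_nonpos.2 hy₀a
    exact div_nonpos_of_nonpos_of_nonneg (mul_nonpos_of_nonpos_of_nonneg
      (mul_nonpos_of_nonneg_of_nonpos ha.le this) (exp_pos _).le) hden.le

theorem abs_riccatiSol_sub_le (ha : 0 < a) (hy₀ : 0 ≤ y₀) (hk : 0 ≤ k) (ht : 0 ≤ t) :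
    |riccatiSol a k y₀ t - a| ≤ |y₀ - a| * exp (-(k * t)) := by
  have hden := le_riccatiSol_denom ha.le hy₀ hk ht
  rw [riccatiSol_sub (ha.trans_le hden).ne', abs_div, abs_mul, abs_mul, abs_of_pos ha,
    abs_of_pos (exp_pos _), abs_of_pos (ha.trans_le hden), div_le_iff₀ (ha.trans_le hden)]
  calc a * |y₀ - a| * exp (-(k * t)) = |y₀ - a| * exp (-(k * t)) * a := by ring
    _ ≤ _ := by gcongr

theorem tendsto_riccatiSol (ha : 0 < a) (hy₀ : 0 ≤ y₀) (hk : 0 < k) :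
    Tendsto (riccatiSol a k y₀) atTop (𝓝 a) := by
  have hexp : Tendsto (fun t => |y₀ - a| * exp (-(k * t))) atTop (𝓝 0) := by
    simpa using (tendsto_exp_neg_atTop_nhds_zero.comp
      (tendsto_id.const_mul_atTop hk)).const_mul |y₀ - a|
  rw [tendsto_iff_norm_sub_tendsto_zero]
  exact squeeze_zero' (.of_forall fun _ => norm_nonneg _)
    ((eventually_ge_atTop 0).mono fun t ht => abs_riccatiSol_sub_le ha hy₀ hk.le ht) hexp

end

theorem hasDerivAt_riccatiSol_sqrt_div {p q y₀ t : ℝ} (hp : 0 < p) (hq : 0 < q) (hy₀ : 0 ≤ y₀)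
    (ht : 0 ≤ t) :
    HasDerivAt (riccatiSol √(p / q) (q * √(p / q)) y₀)
      (p - q * riccatiSol √(p / q) (q * √(p / q)) y₀ t ^ 2) t := by
  have ha : 0 < √(p / q) := sqrt_pos.2 (div_pos hp hq)
  have hden := ha.trans_le (le_riccatiSol_denom ha.le hy₀ (mul_nonneg hq.le ha.le) ht)
  refine (hasDerivAt_riccatiSol ha.ne' hden.ne').congr_deriv ?_
  rw [mul_assoc, mul_self_sqrt (div_pos hp hq).le, mul_div_cancel_right₀ _ ha.ne',
    mul_div_cancel₀ _ hq.ne']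

/-- For `α > 1`, the normalized `(RH)_α` flow ODE system on `S² × L`,
`c' = (α-1) - (α+1)c²`, `d' = (α+1) - (α-1)d²`, `c 0 = d 0 = 1`, has a solution
for all `t ≥ 0`, with `c` trapped in `[√((α-1)/(α+1)), 1]`, `d` trapped in
`[1, √((α+1)/(α-1))]`, and `c(t) → √((α-1)/(α+1))`, `d(t) → √((α+1)/(α-1))` as `t → ∞`. -/
theorem stmt_1 (α : ℝ) (hα : 1 < α) :
    ∃ c d : ℝ → ℝ,
      c 0 = 1 ∧ d 0 = 1 ∧
      (∀ t : ℝ, 0 ≤ t → HasDerivAt c ((α - 1) - (α + 1) * (c t) ^ 2) t) ∧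
      (∀ t : ℝ, 0 ≤ t → HasDerivAt d ((α + 1) - (α - 1) * (d t) ^ 2) t) ∧
      (∀ t : ℝ, 0 ≤ t → c t ∈ Set.Icc (Real.sqrt ((α - 1) / (α + 1))) 1) ∧
      (∀ t : ℝ, 0 ≤ t → d t ∈ Set.Icc 1 (Real.sqrt ((α + 1) / (α - 1)))) ∧
      Tendsto c atTop (nhds (Real.sqrt ((α - 1) / (α + 1)))) ∧
      Tendsto d atTop (nhds (Real.sqrt ((α + 1) / (α - 1)))) := by
  have hm : 0 < α - 1 := by linarith
  have hp : 0 < α + 1 := by linarith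
  have ha : 0 < √((α - 1) / (α + 1)) := sqrt_pos.2 (div_pos hm hp)
  have hb : 0 < √((α + 1) / (α - 1)) := sqrt_pos.2 (div_pos hp hm)
  have ha_le : √((α - 1) / (α + 1)) ≤ 1 := sqrt_le_one.2 ((div_le_one hp).2 (by linarith))
  have hb_ge : 1 ≤ √((α + 1) / (α - 1)) := one_le_sqrt.2 ((one_le_div hm).2 (by linarith))
  refine ⟨riccatiSol _ ((α + 1) * √((α - 1) / (α + 1))) 1,
    riccatiSol _ ((α - 1) * √((α + 1) / (α - 1))) 1,
    riccatiSol_zero ha.ne', riccatiSol_zero hb.ne',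
    fun t ht => hasDerivAt_riccatiSol_sqrt_div hm hp zero_le_one ht,
    fun t ht => hasDerivAt_riccatiSol_sqrt_div hp hm zero_le_one ht,
    fun t ht => riccatiSol_mem_Icc_of_le ha ha_le (by positivity) ht,
    fun t ht => riccatiSol_mem_Icc_of_ge hb zero_le_one hb_ge (by positivity) ht,
    tendsto_riccatiSol ha zero_le_one (by positivity),
    tendsto_riccatiSol hb zero_le_one (by positivity)⟩
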